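/- For every Dyck path D with n up steps and n down steps, there exists a unique S-Motzkin path of length 3n obtained by inserting n horizontal steps into D such that each horizontal step is inserted in the leftmost possible position (greedily from left to right) making the non-down-step subword equal to (hu)^n. -/

import Mathlib

inductive Step : Type
  | u : Step
  | d : Step
  | h : Step
deriving DecidableEq, Repr

def stepVal : Step → ℤ
  | Step.u => 1
  | Step.d => -1
  | Step.h => 0

/-- Sum of step values (final height) of a word. -/
def hsum (w : List Step) : ℤ := (w.map stepVal).sum

/-- All prefixes have nonnegative height. -/
def NonnegPrefixes (w : List Step) : Prop := ∀ p : List Step, p <+: w → 0 ≤ hsum p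

/-- A Motzkin path: nonnegative prefix heights and total height 0. -/
def IsMotzkin (w : List Step) : Prop := NonnegPrefixes w ∧ hsum w = 0

/-- The word (hu)^n. -/
def huWord (n : ℕ) : List Step := (List.replicate n [Step.h, Step.u]).flatten

/-- An S-Motzkin path with n up, n down, n horizontal steps:
a Motzkin path whose subword of non-down steps is (hu)^n. -/
def IsSMotzkin (n : ℕ) (w : List Step) : Prop :=
  IsMotzkin w ∧ w.count Step.u = n ∧ w.count Step.d = n ∧ w.count Step.h = n ∧
    w.filter (fun s => s ≠ Step.d) = huWord n

/-- A nonempty word over {h, u}. -/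
def HUBlock (A : List Step) : Prop := A ≠ [] ∧ ∀ s ∈ A, s = Step.h ∨ s = Step.u

/-- Glue blocks A_i with runs of d_i down steps: A_0 d^{d_1} A_1 d^{d_2} ... -/
def joinAM (As : List (List Step)) (ds : List ℕ) : List Step :=
  (List.zipWith (fun A k => A ++ List.replicate k Step.d) As ds).flatten

/-- w decomposes as A_0 D_1 A_1 D_2 ... A_{t-1} D_t with A_i nonempty over {h,u}
and D_i nonempty runs of down steps. -/
def AMDecomp (w : List Step) (As : List (List Step)) (ds : List ℕ) : Prop :=
  As.length = ds.length ∧ (∀ A ∈ As, HUBlock A) ∧ (∀ k ∈ ds, 0 < k) ∧ w = joinAM As ds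

/-- An Asinowski–Mansour path with n up, n down, n horizontal steps. -/
def IsAM (n : ℕ) (w : List Step) : Prop :=
  IsMotzkin w ∧ w.count Step.u = n ∧ w.count Step.d = n ∧ w.count Step.h = n ∧
    ∃ As ds, AMDecomp w As ds

/-- A Dyck path with n up and n down steps, encoded over the alphabet Step. -/
def IsDyck (n : ℕ) (w : List Step) : Prop :=
  (∀ s ∈ w, s = Step.u ∨ s = Step.d) ∧ w.count Step.u = n ∧ w.count Step.d = n ∧
    NonnegPrefixes w

/-- Height of the path at the start of step i. -/
def heightAt (w : List Step) (i : ℕ) : ℤ := hsum (w.take i)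

/-- Two horizontal steps at positions i < j, at the same height, with all steps
strictly between them at or above that height. -/
def Matched (w : List Step) (i j : ℕ) : Prop :=
  i < j ∧ w[i]? = some Step.h ∧ w[j]? = some Step.h ∧
    heightAt w i = heightAt w j ∧ ∀ k, i < k → k < j → heightAt w i ≤ heightAt w k

/-- Positions of the horizontal steps of w, from left to right. -/
def hPositions (w : List Step) : List ℕ := List.findIdxs (fun s => s = Step.h) w

/-- Lexicographic (weak) order on lists of naturals. -/
def LexLe (l l' : List ℕ) : Prop := l = l' ∨ List.Lex (· < ·) l l'

/-- w is an S-Motzkin word obtained by inserting horizontal steps into D. -/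
def ValidIns (D w : List Step) : Prop :=
  (∃ m, IsSMotzkin m w) ∧ w.filter (fun s => s ≠ Step.h) = D

/-- w is the greedy h-insertion into D: each h leftmost, i.e. the list of positions
of the h's is lexicographically minimal among all valid insertions. -/
def GreedyFor (D w : List Step) : Prop :=
  ValidIns D w ∧ ∀ w', ValidIns D w' → LexLe (hPositions w) (hPositions w')

/-!
Deleting the `h`'s from a word preserves every prefix height, so inserting `h` right before each
`u` of a Dyck path gives a valid insertion, and every valid insertion into a Dyck path of
semilength `n` is an S-Motzkin path of length `3n`. The valid insertions thus form a finite
nonempty set, on which `hPositions` is injective because a word is determined by its `h`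
positions together with its non-`h` subword. Hence the lexicographic minimum of `hPositions`
is attained at exactly one valid insertion.
-/

instance : Fintype Step :=
  ⟨{Step.u, Step.d, Step.h}, by intro x; cases x <;> simp⟩

theorem Set.Finite.existsUnique_forall_le_of_injOn {α β : Type*} [LinearOrder β] {s : Set α}
    (hs : s.Finite) (hne : s.Nonempty) {f : α → β} (hf : s.InjOn f) :
    ∃! a, a ∈ s ∧ ∀ b ∈ s, f a ≤ f b := by
  obtain ⟨a, ha, hmin⟩ := s.exists_min_image f hs hne
  exact ⟨a, ⟨ha, hmin⟩, fun b ⟨hb, hbmin⟩ => hf hb ha (le_antisymm (hbmin a ha) (hmin b hb))⟩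

theorem lexLe_iff_le (l l' : List ℕ) : LexLe l l' ↔ l ≤ l' := by
  rw [LexLe, List.lex_lt, le_iff_eq_or_lt]

theorem hsum_cons (s : Step) (t : List Step) : hsum (s :: t) = stepVal s + hsum t := by
  simp [hsum]

theorem hsum_eq_count_sub_count (w : List Step) :
    hsum w = (w.count Step.u : ℤ) - w.count Step.d := by
  induction w with
  | nil => rfl
  | cons s t ih => cases s <;> simp [hsum_cons, ih, stepVal] <;> ring

theorem length_eq_count_add_count_add_count (w : List Step) :
    w.length = w.count Step.u + w.count Step.d + w.count Step.h := by
  induction w with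
  | nil => rfl
  | cons s t ih => cases s <;> simp [ih] <;> ring

theorem count_filter_ne_h {a : Step} (ha : a ≠ Step.h) (w : List Step) :
    (w.filter (fun s => s ≠ Step.h)).count a = w.count a := by
  induction w with
  | nil => rfl
  | cons s t ih => cases s <;> cases a <;> simp_all

theorem hsum_filter_ne_h (w : List Step) : hsum (w.filter (fun s => s ≠ Step.h)) = hsum w := by
  rw [hsum_eq_count_sub_count, hsum_eq_count_sub_count, count_filter_ne_h (by simp),
    count_filter_ne_h (by simp)]

theorem NonnegPrefixes.of_filter_ne_h {w : List Step}
    (hw : NonnegPrefixes (w.filter (fun s => s ≠ Step.h))) : NonnegPrefixes w := by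
  rintro p ⟨t, rfl⟩
  rw [← hsum_filter_ne_h]
  exact hw _ ⟨t.filter _, (List.filter_append _ _).symm⟩

theorem hPositions_cons_h (t : List Step) :
    hPositions (Step.h :: t) = 0 :: (hPositions t).map (· + 1) := by
  simp [hPositions, List.findIdxs_cons, List.findIdxs_start (s := 1)]

theorem hPositions_cons_of_ne {s : Step} (hs : s ≠ Step.h) (t : List Step) :
    hPositions (s :: t) = (hPositions t).map (· + 1) := by
  cases s <;> simp_all [hPositions, List.findIdxs_cons, List.findIdxs_start (s := 1)]

theorem zero_mem_hPositions_cons_iff (s : Step) (t : List Step) :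
    0 ∈ hPositions (s :: t) ↔ s = Step.h := by
  by_cases hs : s = Step.h
  · simp [hs, hPositions_cons_h]
  · simp [hs, hPositions_cons_of_ne hs]

theorem eq_of_filter_ne_h_eq_of_hPositions_eq {w w' : List Step}
    (hf : w.filter (fun s => s ≠ Step.h) = w'.filter (fun s => s ≠ Step.h))
    (hp : hPositions w = hPositions w') : w = w' := by
  induction w generalizing w' with
  | nil =>
    cases w' with
    | nil => rfl
    | cons b t' =>
      by_cases hb : b = Step.h
      · simp [hb, hPositions] at hp
      · simp [hb] at hf
  | cons a t ih =>
    cases w' with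
    | nil =>
      by_cases ha : a = Step.h
      · simp [ha, hPositions] at hp
      · simp [ha] at hf
    | cons b t' =>
      have hab : a = Step.h ↔ b = Step.h := by
        rw [← zero_mem_hPositions_cons_iff a t, ← zero_mem_hPositions_cons_iff b t', hp]
      by_cases ha : a = Step.h
      · obtain rfl : b = Step.h := hab.mp ha
        subst ha
        rw [hPositions_cons_h, hPositions_cons_h] at hp
        simp only [List.filter_cons, ne_eq, not_true_eq_false, decide_false,
          Bool.false_eq_true, ↓reduceIte] at hf
        exact congrArg _ (ih hf (List.map_injective_iff.mpr (add_left_injective 1)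
          (List.cons_injective hp)))
      · have hb : b ≠ Step.h := mt hab.mpr ha
        rw [hPositions_cons_of_ne ha, hPositions_cons_of_ne hb] at hp
        simp only [List.filter_cons, ne_eq, ha, hb, not_false_eq_true, decide_true,
          ↓reduceIte, List.cons.injEq] at hf
        rw [hf.1, ih hf.2 (List.map_injective_iff.mpr (add_left_injective 1) hp)]

def insertHBeforeU (D : List Step) : List Step :=
  D.flatMap (fun s => if s = Step.u then [Step.h, Step.u] else [s])

theorem huWord_succ (n : ℕ) : huWord (n + 1) = Step.h :: Step.u :: huWord n := by
  simp [huWord, List.replicate_succ]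

theorem count_insertHBeforeU_of_ne_h {a : Step} (ha : a ≠ Step.h) (D : List Step) :
    (insertHBeforeU D).count a = D.count a := by
  induction D with
  | nil => rfl
  | cons s t ih =>
    cases s <;> cases a <;> simp_all [insertHBeforeU]

theorem count_h_insertHBeforeU (D : List Step) :
    (insertHBeforeU D).count Step.h = D.count Step.u + D.count Step.h := by
  induction D with
  | nil => rfl
  | cons s t ih =>
    cases s <;> simp_all [insertHBeforeU] <;> omega

theorem filter_ne_h_insertHBeforeU {D : List Step} (hD : Step.h ∉ D) :
    (insertHBeforeU D).filter (fun s => s ≠ Step.h) = D := by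
  induction D with
  | nil => rfl
  | cons s t ih =>
    rw [List.mem_cons, not_or] at hD
    cases s <;> simp_all [insertHBeforeU]

theorem filter_ne_d_insertHBeforeU {D : List Step} (hD : Step.h ∉ D) :
    (insertHBeforeU D).filter (fun s => s ≠ Step.d) = huWord (D.count Step.u) := by
  induction D with
  | nil => rfl
  | cons s t ih =>
    rw [List.mem_cons, not_or] at hD
    cases s <;> simp_all [insertHBeforeU, huWord_succ]

theorem IsDyck.h_notMem {n : ℕ} {D : List Step} (hD : IsDyck n D) : Step.h ∉ D := by
  intro hmem
  rcases hD.1 _ hmem with h | h <;> cases h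

theorem IsDyck.validIns_insertHBeforeU {n : ℕ} {D : List Step} (hD : IsDyck n D) :
    ValidIns D (insertHBeforeU D) := by
  have hh := hD.h_notMem
  obtain ⟨-, hu, hd, hnonneg⟩ := hD
  have hfil := filter_ne_h_insertHBeforeU hh
  have hcu := count_insertHBeforeU_of_ne_h (a := Step.u) (by simp) D
  have hcd := count_insertHBeforeU_of_ne_h (a := Step.d) (by simp) D
  have hch := count_h_insertHBeforeU D
  rw [List.count_eq_zero.mpr hh] at hch
  refine ⟨⟨n, ⟨?_, ?_⟩, by omega, by omega, by omega, ?_⟩, hfil⟩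
  · exact NonnegPrefixes.of_filter_ne_h (by rwa [hfil])
  · rw [hsum_eq_count_sub_count]
    omega
  · rw [filter_ne_d_insertHBeforeU hh, hu]

theorem ValidIns.isSMotzkin {n : ℕ} {D w : List Step} (hw : ValidIns D w)
    (hDu : D.count Step.u = n) : IsSMotzkin n w := by
  obtain ⟨⟨m, hm⟩, hfil⟩ := hw
  obtain rfl : m = n := by
    rw [← hDu, ← hfil, count_filter_ne_h (by simp), hm.2.1]
  exact hm

theorem IsSMotzkin.length_eq {n : ℕ} {w : List Step} (hw : IsSMotzkin n w) :
    w.length = 3 * n := by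
  rw [length_eq_count_add_count_add_count, hw.2.1, hw.2.2.1, hw.2.2.2.1]
  ring

/-- for every Dyck path D with n up and n down steps there is a unique
S-Motzkin path of length 3n obtained by inserting n horizontal steps into D with
every h in the leftmost possible position (h-position list lexicographically minimal). -/
theorem greedy_insertion_exists_unique (n : ℕ) (D : List Step) (hD : IsDyck n D) :
    ∃! w : List Step, IsSMotzkin n w ∧ w.filter (fun s => s ≠ Step.h) = D ∧
      ∀ w', ValidIns D w' → LexLe (hPositions w) (hPositions w') := by
  have hS : ∀ w, ValidIns D w → IsSMotzkin n w := fun w hw => hw.isSMotzkin hD.2.1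
  have hfinite : {w | ValidIns D w}.Finite :=
    (List.finite_length_eq Step (3 * n)).subset fun w hw => (hS w hw).length_eq
  have hinj : {w | ValidIns D w}.InjOn hPositions := fun w hw w' hw' hp =>
    eq_of_filter_ne_h_eq_of_hPositions_eq (hw.2.trans hw'.2.symm) hp
  refine (existsUnique_congr fun w => ?_).mp
    (hfinite.existsUnique_forall_le_of_injOn ⟨_, hD.validIns_insertHBeforeU⟩ hinj)
  simp only [Set.mem_ofPred_eq, lexLe_iff_le]
  exact ⟨fun ⟨hw, hmin⟩ => ⟨hS w hw, hw.2, hmin⟩, fun ⟨hw, hfil, hmin⟩ => ⟨⟨⟨n, hw⟩, hfil⟩, hmin⟩⟩
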